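/- arXiv:2111.11678 — 2 statements merged into one kernel-verified Lean document; each statement's English description precedes it below -/
import Mathlib

section
/- Let m, n ≥ 1 be integers, let t be a real number, and let μ : Fin m → ℝ and ν : Fin n → ℝ be families of real numbers such that t + min_{l} ν_l > max_{j} μ_j. Let A be an m × n complex matrix and define the m × n complex matrix B by B_{jl} = A_{jl}/(t − μ_j + ν_l) (all denominators are positive by the hypothesis). Then ‖B‖ ≤ ‖A‖ / (t + min_l ν_l − max_j μ_j), where ‖·‖ denotes the operator norm of a matrix as a linear map between Euclidean spaces ℂ^n → ℂ^m. -/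
/-- The operator norm of a complex `m × n` matrix viewed as a linear map
between the Euclidean spaces `ℂ^n → ℂ^m`. -/
noncomputable def matrixOpNorm {m n : ℕ} (A : Matrix (Fin m) (Fin n) ℂ) : ℝ :=
  ‖LinearMap.toContinuousLinearMap (Matrix.toEuclideanLin A)‖

/-!
Write `B = ∫₀^∞ e^{-s D_a} A e^{-s D_b} ds` with `a_j = t - μ_j`, `b_l = ν_l`: entrywise this is
`∫₀^∞ e^{-(a_j + b_l) s} ds = 1 / (a_j + b_l)`. The diagonal factors have operator norm at most
`e^{-αs}` and `e^{-βs}` when `a ≥ α` and `b ≥ β`, so the integrand has norm at most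
`e^{-(α+β)s} ‖A‖`, whose integral is `‖A‖ / (α + β)`.
-/

open MeasureTheory Set Real
open scoped Matrix.Norms.L2Operator

theorem integral_exp_neg_mul_Ioi_zero {c : ℝ} (hc : 0 < c) :
    ∫ s in Ioi (0 : ℝ), exp (-c * s) = c⁻¹ := by
  rw [integral_exp_mul_Ioi (neg_lt_zero.2 hc), mul_zero, exp_zero, neg_div_neg_eq, one_div]

namespace Matrix

variable {m n : Type*} [Fintype m] [Fintype n] [DecidableEq n]

theorem l2_integral_apply {X : Type*} [MeasurableSpace X] {μ : Measure X}
    {f : X → Matrix m n ℂ} (hf : Integrable f μ) (i : m) (j : n) :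
    (∫ x, f x ∂μ) i j = ∫ x, f x i j ∂μ :=
  ((LinearMap.toContinuousLinearMap (entryLinearMap ℂ ℂ i j)).integral_comp_comm hf).symm

theorem l2_opNorm_diagonal_le {d : n → ℂ} {C : ℝ} (hC : 0 ≤ C) (h : ∀ i, ‖d i‖ ≤ C) :
    ‖diagonal d‖ ≤ C := by
  rw [l2_opNorm_diagonal]
  exact (pi_norm_le_iff_of_nonneg hC).2 h

theorem l2_opNorm_diagonal_exp_neg_mul_le {a : n → ℝ} {α s : ℝ} (ha : ∀ i, α ≤ a i)
    (hs : 0 ≤ s) : ‖diagonal fun i => (exp (-a i * s) : ℂ)‖ ≤ exp (-α * s) :=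
  l2_opNorm_diagonal_le (exp_nonneg _) fun i => by
    rw [Complex.norm_real, norm_of_nonneg (exp_nonneg _), exp_le_exp]
    nlinarith [ha i]

variable [DecidableEq m]

theorem l2_opNorm_div_add_le (A : Matrix m n ℂ) {a : m → ℝ} {b : n → ℝ} {α β : ℝ}
    (hαβ : 0 < α + β) (ha : ∀ i, α ≤ a i) (hb : ∀ j, β ≤ b j) :
    ‖of fun i j => A i j / ((a i + b j : ℝ) : ℂ)‖ ≤ ‖A‖ / (α + β) := by
  set N : ℝ → Matrix m n ℂ := fun s =>
    diagonal (fun i => (exp (-a i * s) : ℂ)) * A * diagonal (fun j => (exp (-b j * s) : ℂ))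
  have hN_apply : ∀ s i j, N s i j = (exp (-(a i + b j) * s) : ℂ) * A i j := by
    intro s i j
    simp only [N, mul_diagonal, diagonal_mul]
    rw [neg_add, add_mul, exp_add, Complex.ofReal_mul]
    ring
  have hN_le : ∀ᵐ s ∂volume.restrict (Ioi 0), ‖N s‖ ≤ exp (-(α + β) * s) * ‖A‖ := by
    filter_upwards [ae_restrict_mem measurableSet_Ioi] with s hs
    calc ‖N s‖ ≤ ‖diagonal (fun i => (exp (-a i * s) : ℂ))‖ * ‖A‖ *
          ‖diagonal (fun j => (exp (-b j * s) : ℂ))‖ :=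
          (l2_opNorm_mul _ _).trans (mul_le_mul_of_nonneg_right (l2_opNorm_mul _ _) (norm_nonneg _))
      _ ≤ exp (-α * s) * ‖A‖ * exp (-β * s) := by
          gcongr
          · exact l2_opNorm_diagonal_exp_neg_mul_le ha hs.le
          · exact l2_opNorm_diagonal_exp_neg_mul_le hb hs.le
      _ = exp (-(α + β) * s) * ‖A‖ := by
          rw [mul_right_comm, ← exp_add]
          ring_nf
  have hg : IntegrableOn (fun s => exp (-(α + β) * s) * ‖A‖) (Ioi 0) :=
    (exp_neg_integrableOn_Ioi 0 hαβ).mul_const _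
  have hN_int : IntegrableOn N (Ioi 0) :=
    hg.mono' (Continuous.aestronglyMeasurable (by fun_prop)) hN_le
  have h_integral : ∫ s in Ioi (0 : ℝ), N s = of fun i j => A i j / ((a i + b j : ℝ) : ℂ) := by
    ext i j
    rw [l2_integral_apply hN_int]
    simp_rw [hN_apply]
    rw [integral_mul_const, integral_complex_ofReal,
      integral_exp_neg_mul_Ioi_zero (by linarith [ha i, hb j]), of_apply, Complex.ofReal_inv,
      inv_mul_eq_div]
  calc _ = ‖∫ s in Ioi (0 : ℝ), N s‖ := by rw [h_integral]
    _ ≤ ∫ s in Ioi (0 : ℝ), exp (-(α + β) * s) * ‖A‖ :=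
      norm_integral_le_of_norm_le hg hN_le
    _ = ‖A‖ / (α + β) := by
      rw [integral_mul_const, integral_exp_neg_mul_Ioi_zero hαβ, inv_mul_eq_div]

end Matrix

theorem stmt2 (m n : ℕ) (hm : 0 < m) (hn : 0 < n) (t : ℝ)
    (μ : Fin m → ℝ) (ν : Fin n → ℝ)
    (hμν : Finset.univ.sup' (Finset.univ_nonempty_iff.mpr ⟨⟨0, hm⟩⟩) μ <
      t + Finset.univ.inf' (Finset.univ_nonempty_iff.mpr ⟨⟨0, hn⟩⟩) ν)
    (A B : Matrix (Fin m) (Fin n) ℂ)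
    (hB : ∀ j l, B j l = A j l / ((t - μ j + ν l : ℝ) : ℂ)) :
    matrixOpNorm B ≤ matrixOpNorm A /
      (t + Finset.univ.inf' (Finset.univ_nonempty_iff.mpr ⟨⟨0, hn⟩⟩) ν
        - Finset.univ.sup' (Finset.univ_nonempty_iff.mpr ⟨⟨0, hm⟩⟩) μ) := by
  set S := Finset.univ.sup' (Finset.univ_nonempty_iff.mpr ⟨⟨0, hm⟩⟩) μ
  set I := Finset.univ.inf' (Finset.univ_nonempty_iff.mpr ⟨⟨0, hn⟩⟩) ν
  have hS : ∀ j, μ j ≤ S := fun j => Finset.le_sup' μ (Finset.mem_univ j)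
  have hI : ∀ l, I ≤ ν l := fun l => Finset.inf'_le ν (Finset.mem_univ l)
  have hB' : B = Matrix.of fun j l => A j l / ((t - μ j + ν l : ℝ) : ℂ) := Matrix.ext hB
  have key := Matrix.l2_opNorm_div_add_le A (a := fun j => t - μ j) (α := t - S)
    (by linarith) (fun j => sub_le_sub_left (hS j) t) hI
  rw [sub_add_eq_add_sub, ← hB'] at key
  -- `matrixOpNorm` unfolds to the L² operator norm `‖·‖` of `Matrix.Norms.L2Operator`
  exact key
end

section
/- Let m, n ≥ 1 be integers, let A be an m × n complex matrix, and let ξ ∈ ℂ^n. Then Σ_{j=0}^{m−1} ( Σ_{l=0}^{n−1} |A_{jl}| · |ξ_l| )² ≤ min(m, n) · ‖A‖² · ‖ξ‖², where ‖A‖ is the operator norm of A as a linear map ℂ^n → ℂ^m with Euclidean norms and ‖ξ‖ is the Euclidean norm of ξ. In particular, if B is an m × n complex matrix with |B_{jl}| ≤ c·|A_{jl}| for all j, l and some c ≥ 0, then ‖B‖ ≤ c · (min(m,n))^{1/2} · ‖A‖. -/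
open scoped Matrix.Norms.L2Operator

namespace Matrix

variable {𝕜 m n : Type*} [RCLike 𝕜] [Fintype m] [Fintype n]

lemma sum_norm_sq_col_le_l2_opNorm_sq [DecidableEq n] (A : Matrix m n 𝕜) (j : n) :
    ∑ i, ‖A i j‖ ^ 2 ≤ ‖A‖ ^ 2 := by
  have hcol := A.l2_opNorm_mulVec (EuclideanSpace.single j 1)
  rw [PiLp.norm_single, norm_one, mul_one, PiLp.ofLp_single, mulVec_single_one] at hcol
  simpa [EuclideanSpace.norm_sq_eq] using pow_le_pow_left₀ (norm_nonneg _) hcol 2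

lemma sum_norm_sq_row_le_l2_opNorm_sq [DecidableEq m] [DecidableEq n] (A : Matrix m n 𝕜) (i : m) :
    ∑ j, ‖A i j‖ ^ 2 ≤ ‖A‖ ^ 2 := by
  simpa [l2_opNorm_conjTranspose] using Aᴴ.sum_norm_sq_col_le_l2_opNorm_sq i

lemma sq_sum_norm_mul_norm_le [DecidableEq m] [DecidableEq n] (A : Matrix m n 𝕜)
    (x : EuclideanSpace 𝕜 n) (i : m) :
    (∑ j, ‖A i j‖ * ‖x j‖) ^ 2 ≤ ‖A‖ ^ 2 * ‖x‖ ^ 2 := by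
  calc (∑ j, ‖A i j‖ * ‖x j‖) ^ 2 ≤ (∑ j, ‖A i j‖ ^ 2) * ∑ j, ‖x j‖ ^ 2 :=
        Finset.sum_mul_sq_le_sq_mul_sq _ _ _
    _ ≤ ‖A‖ ^ 2 * ‖x‖ ^ 2 := by
        rw [EuclideanSpace.norm_sq_eq]
        gcongr
        exact A.sum_norm_sq_row_le_l2_opNorm_sq i

lemma sum_sq_sum_norm_mul_norm_le_card_rows [DecidableEq m] [DecidableEq n] (A : Matrix m n 𝕜)
    (x : EuclideanSpace 𝕜 n) :
    ∑ i, (∑ j, ‖A i j‖ * ‖x j‖) ^ 2 ≤ Fintype.card m * ‖A‖ ^ 2 * ‖x‖ ^ 2 := by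
  calc ∑ i, (∑ j, ‖A i j‖ * ‖x j‖) ^ 2 ≤ ∑ _i : m, ‖A‖ ^ 2 * ‖x‖ ^ 2 :=
        Finset.sum_le_sum fun i _ => A.sq_sum_norm_mul_norm_le x i
    _ = Fintype.card m * ‖A‖ ^ 2 * ‖x‖ ^ 2 := by simp [mul_assoc]

lemma sum_sq_sum_norm_mul_norm_le_card_cols [DecidableEq n] (A : Matrix m n 𝕜)
    (x : EuclideanSpace 𝕜 n) :
    ∑ i, (∑ j, ‖A i j‖ * ‖x j‖) ^ 2 ≤ Fintype.card n * ‖A‖ ^ 2 * ‖x‖ ^ 2 := by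
  calc ∑ i, (∑ j, ‖A i j‖ * ‖x j‖) ^ 2
      ≤ ∑ i, Fintype.card n * ∑ j, ‖A i j‖ ^ 2 * ‖x j‖ ^ 2 := by
        gcongr with i
        simpa [mul_pow] using sq_sum_le_card_mul_sum_sq (s := Finset.univ)
          (f := fun j => ‖A i j‖ * ‖x j‖)
    _ = Fintype.card n * ∑ j, (∑ i, ‖A i j‖ ^ 2) * ‖x j‖ ^ 2 := by
        simp only [← Finset.mul_sum, Finset.sum_mul]
        rw [Finset.sum_comm]
    _ ≤ Fintype.card n * ∑ j, ‖A‖ ^ 2 * ‖x j‖ ^ 2 := by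
        gcongr with j
        exact A.sum_norm_sq_col_le_l2_opNorm_sq j
    _ = Fintype.card n * ‖A‖ ^ 2 * ‖x‖ ^ 2 := by
        rw [EuclideanSpace.norm_sq_eq, mul_assoc, ← Finset.mul_sum]

lemma sum_sq_sum_norm_mul_norm_le [DecidableEq m] [DecidableEq n] (A : Matrix m n 𝕜)
    (x : EuclideanSpace 𝕜 n) :
    ∑ i, (∑ j, ‖A i j‖ * ‖x j‖) ^ 2 ≤
      min (Fintype.card m : ℝ) (Fintype.card n) * ‖A‖ ^ 2 * ‖x‖ ^ 2 := by
  rcases min_cases (Fintype.card m : ℝ) (Fintype.card n) with ⟨h, -⟩ | ⟨h, -⟩ <;> rw [h]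
  · exact A.sum_sq_sum_norm_mul_norm_le_card_rows x
  · exact A.sum_sq_sum_norm_mul_norm_le_card_cols x

lemma l2_opNorm_le_of_norm_apply_le [DecidableEq m] [DecidableEq n] {A B : Matrix m n 𝕜}
    {c : ℝ} (hc : 0 ≤ c) (hBA : ∀ i j, ‖B i j‖ ≤ c * ‖A i j‖) :
    ‖B‖ ≤ c * √(min (Fintype.card m : ℝ) (Fintype.card n)) * ‖A‖ := by
  set K := c * √(min (Fintype.card m : ℝ) (Fintype.card n)) * ‖A‖
  have hrow (x : EuclideanSpace 𝕜 n) (i : m) :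
      ‖∑ j, B i j * x j‖ ≤ c * ∑ j, ‖A i j‖ * ‖x j‖ := by
    rw [Finset.mul_sum]
    refine (norm_sum_le _ _).trans (Finset.sum_le_sum fun j _ => ?_)
    rw [norm_mul, ← mul_assoc]
    gcongr
    exact hBA i j
  rw [l2_opNorm_def]
  refine ContinuousLinearMap.opNorm_le_bound _ (by positivity) fun x => ?_
  rw [← pow_le_pow_iff_left₀ (norm_nonneg _) (by positivity) two_ne_zero]
  calc ‖(EuclideanSpace.equiv m 𝕜).symm (B *ᵥ x)‖ ^ 2 = ∑ i, ‖∑ j, B i j * x j‖ ^ 2 :=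
        EuclideanSpace.norm_sq_eq _
    _ ≤ ∑ i, (c * ∑ j, ‖A i j‖ * ‖x j‖) ^ 2 := by
        gcongr with i
        exact hrow x i
    _ = c ^ 2 * ∑ i, (∑ j, ‖A i j‖ * ‖x j‖) ^ 2 := by
        rw [Finset.mul_sum]
        simp only [mul_pow]
    _ ≤ c ^ 2 * (min (Fintype.card m : ℝ) (Fintype.card n) * ‖A‖ ^ 2 * ‖x‖ ^ 2) := by
        gcongr
        exact A.sum_sq_sum_norm_mul_norm_le x
    _ = (K * ‖x‖) ^ 2 := by
        rw [mul_pow, mul_pow, mul_pow, Real.sq_sqrt (by positivity)]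
        ring

end Matrix

theorem stmt3_general (m n : ℕ) (A : Matrix (Fin m) (Fin n) ℂ) :
    (∀ ξ : EuclideanSpace ℂ (Fin n),
      ∑ j : Fin m, (∑ l : Fin n, ‖A j l‖ * ‖ξ l‖) ^ 2 ≤
        (min m n : ℝ) * matrixOpNorm A ^ 2 * ‖ξ‖ ^ 2) ∧
    (∀ (B : Matrix (Fin m) (Fin n) ℂ) (c : ℝ), 0 ≤ c →
      (∀ j l, ‖B j l‖ ≤ c * ‖A j l‖) →
      matrixOpNorm B ≤ c * Real.sqrt (min m n : ℝ) * matrixOpNorm A) := by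
  have hnorm (M : Matrix (Fin m) (Fin n) ℂ) : matrixOpNorm M = ‖M‖ := rfl
  refine ⟨fun ξ => ?_, fun B c hc hBA => ?_⟩
  · simpa [hnorm] using A.sum_sq_sum_norm_mul_norm_le ξ
  · simpa [hnorm] using Matrix.l2_opNorm_le_of_norm_apply_le hc hBA

theorem stmt3 (m n : ℕ) (hm : 0 < m) (hn : 0 < n) (A : Matrix (Fin m) (Fin n) ℂ) :
    (∀ ξ : EuclideanSpace ℂ (Fin n),
      ∑ j : Fin m, (∑ l : Fin n, ‖A j l‖ * ‖ξ l‖) ^ 2 ≤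
        (min m n : ℝ) * matrixOpNorm A ^ 2 * ‖ξ‖ ^ 2) ∧
    (∀ (B : Matrix (Fin m) (Fin n) ℂ) (c : ℝ), 0 ≤ c →
      (∀ j l, ‖B j l‖ ≤ c * ‖A j l‖) →
      matrixOpNorm B ≤ c * Real.sqrt (min m n : ℝ) * matrixOpNorm A) :=
  stmt3_general m n A
end
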